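/- arXiv:0807.3709 — 3 statements merged into one kernel-verified Lean document; each statement's English description precedes it below -/
import Mathlib

section
/- Let Q₁ = I₁ × J₁ and Q₂ = I₂ × J₂ be axis-parallel rectangles in ℝ², each of side lengths at most ρ > 0, with dist(Q₁, Q₂) = D > 0. Then the set E = {λ ∈ ℝ : (I₁ + λJ₁) ∩ (I₂ + λJ₂) ≠ ∅, |λ| ≤ A} has Lebesgue measure at most C·ρ/D for a constant C depending only on A. -/
open MeasureTheory

/-- Transversality estimate: if `Q₁ = I₁ × J₁` and `Q₂ = I₂ × J₂` are axis-parallel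
rectangles with sides at most `ρ` and at distance at least `D > 0`, then the set of
`λ ∈ [-A, A]` for which `(I₁ + λJ₁) ∩ (I₂ + λJ₂) ≠ ∅` has Lebesgue measure at most
`C·ρ/D`, where `C` depends only on `A`. -/
theorem stmt_3 (A : ℝ) (hA : 0 < A) :
    ∃ C : ℝ, 0 < C ∧
      ∀ (ρ D : ℝ), 0 < ρ → 0 < D →
      ∀ (a₁ b₁ c₁ d₁ a₂ b₂ c₂ d₂ : ℝ),
        a₁ ≤ b₁ → b₁ - a₁ ≤ ρ → c₁ ≤ d₁ → d₁ - c₁ ≤ ρ →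
        a₂ ≤ b₂ → b₂ - a₂ ≤ ρ → c₂ ≤ d₂ → d₂ - c₂ ≤ ρ →
        (∀ p ∈ (Set.Icc a₁ b₁ ×ˢ Set.Icc c₁ d₁ : Set (ℝ × ℝ)),
         ∀ q ∈ (Set.Icc a₂ b₂ ×ˢ Set.Icc c₂ d₂ : Set (ℝ × ℝ)), D ≤ dist p q) →
        volume {l : ℝ | |l| ≤ A ∧
            (Set.image2 (fun x y => x + l * y) (Set.Icc a₁ b₁) (Set.Icc c₁ d₁) ∩
             Set.image2 (fun x y => x + l * y) (Set.Icc a₂ b₂) (Set.Icc c₂ d₂)).Nonempty}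
          ≤ ENNReal.ofReal (C * ρ / D) := by
  refine ⟨8 * (A + 1)^2, by positivity, ?_⟩
  intro ρ D hρ hD a₁ b₁ c₁ d₁ a₂ b₂ c₂ d₂ hab₁ hrb₁ hcd₁ hrd₁ hab₂ hrb₂ hcd₂ hrd₂ hdist
  have hM : (0:ℝ) < max 1 A := lt_of_lt_of_le one_pos (le_max_left _ _)
  -- Key: every witness has |y₁ - y₂| ≥ D / (2 * max 1 A)
  have key : ∀ l x₁ y₁ x₂ y₂, x₁ ∈ Set.Icc a₁ b₁ → y₁ ∈ Set.Icc c₁ d₁ →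
      x₂ ∈ Set.Icc a₂ b₂ → y₂ ∈ Set.Icc c₂ d₂ → |l| ≤ A →
      x₁ + l * y₁ = x₂ + l * y₂ → D / (2 * max 1 A) ≤ |y₁ - y₂| := by
    intro l x₁ y₁ x₂ y₂ hx₁ hy₁ hx₂ hy₂ hl heq
    by_cases h : ∀ s ∈ Set.Icc c₁ d₁, ∀ t ∈ Set.Icc c₂ d₂, D / 2 ≤ |s - t|
    · have h1 := h y₁ hy₁ y₂ hy₂
      have h2 : D / (2 * max 1 A) ≤ D / 2 := by
        apply div_le_div_of_nonneg_left hD.le (by norm_num)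
        nlinarith [le_max_left (1:ℝ) A]
      linarith
    · push_neg at h
      obtain ⟨s, hs, t, ht, hst⟩ := h
      have hd := hdist (x₁, s) ⟨hx₁, hs⟩ (x₂, t) ⟨hx₂, ht⟩
      rw [Prod.dist_eq] at hd
      simp only [Real.dist_eq] at hd
      have hx : D ≤ |x₁ - x₂| := by
        rcases max_cases |x₁ - x₂| |s - t| with ⟨h1, _⟩ | ⟨h1, _⟩ <;> rw [h1] at hd <;> linarith
      have heq' : x₁ - x₂ = l * (y₂ - y₁) := by linarith
      have hbd : |x₁ - x₂| ≤ A * |y₁ - y₂| := by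
        rw [heq', abs_mul, abs_sub_comm y₂ y₁]
        exact mul_le_mul_of_nonneg_right hl (abs_nonneg _)
      rw [div_le_iff₀ (by positivity)]
      nlinarith [le_max_right (1:ℝ) A, abs_nonneg (y₁ - y₂)]
  rcases Set.eq_empty_or_nonempty {l : ℝ | |l| ≤ A ∧
      (Set.image2 (fun x y => x + l * y) (Set.Icc a₁ b₁) (Set.Icc c₁ d₁) ∩
       Set.image2 (fun x y => x + l * y) (Set.Icc a₂ b₂) (Set.Icc c₂ d₂)).Nonempty}
    with hE | ⟨l₀, hl₀⟩
  · rw [hE]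
    simp
  · obtain ⟨hl₀A, p₀, hp₀1, hp₀2⟩ := hl₀
    obtain ⟨X₁, hX₁, Y₁, hY₁, hXY1⟩ := hp₀1
    obtain ⟨X₂, hX₂, Y₂, hY₂, hXY2⟩ := hp₀2
    have heq₀ : X₁ + l₀ * Y₁ = X₂ + l₀ * Y₂ := by simpa using hXY1.trans hXY2.symm
    have hv₀ : D / (2 * max 1 A) ≤ |Y₁ - Y₂| := key l₀ X₁ Y₁ X₂ Y₂ hX₁ hY₁ hX₂ hY₂ hl₀A heq₀
    set K : ℝ := 4 * (A + 1)^2 * ρ / D with hK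
    have hsub : {l : ℝ | |l| ≤ A ∧
        (Set.image2 (fun x y => x + l * y) (Set.Icc a₁ b₁) (Set.Icc c₁ d₁) ∩
         Set.image2 (fun x y => x + l * y) (Set.Icc a₂ b₂) (Set.Icc c₂ d₂)).Nonempty}
        ⊆ Set.Icc (l₀ - K) (l₀ + K) := by
      rintro l ⟨hlA, p, hp1, hp2⟩
      obtain ⟨x₁, hx₁, y₁, hy₁, hxy1⟩ := hp1
      obtain ⟨x₂, hx₂, y₂, hy₂, hxy2⟩ := hp2
      have heq : x₁ + l * y₁ = x₂ + l * y₂ := by simpa using hxy1.trans hxy2.symm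
      have hv : D / (2 * max 1 A) ≤ |y₁ - y₂| := key l x₁ y₁ x₂ y₂ hx₁ hy₁ hx₂ hy₂ hlA heq
      -- algebraic identity
      have hid : (l - l₀) * ((y₁ - y₂) * (Y₁ - Y₂)) =
          (X₁ - X₂) * (y₁ - y₂) - (x₁ - x₂) * (Y₁ - Y₂) := by
        have h1 : x₁ - x₂ = l * (y₂ - y₁) := by linarith
        have h2 : X₁ - X₂ = l₀ * (Y₂ - Y₁) := by linarith
        rw [h1, h2]; ring
      have habs : |l - l₀| * (|y₁ - y₂| * |Y₁ - Y₂|) =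
          |(X₁ - X₂) * (y₁ - y₂) - (x₁ - x₂) * (Y₁ - Y₂)| := by
        rw [← hid, abs_mul, abs_mul]
      -- bounds
      have hu₀ : |X₁ - X₂| ≤ A * |Y₁ - Y₂| := by
        have h2 : X₁ - X₂ = l₀ * (Y₂ - Y₁) := by linarith
        rw [h2, abs_mul, abs_sub_comm Y₂ Y₁]
        exact mul_le_mul_of_nonneg_right hl₀A (abs_nonneg _)
      have hdu : |(x₁ - x₂) - (X₁ - X₂)| ≤ 2 * ρ := by
        rw [abs_sub_le_iff]
        obtain ⟨h1, h2⟩ := hx₁; obtain ⟨h3, h4⟩ := hx₂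
        obtain ⟨h5, h6⟩ := hX₁; obtain ⟨h7, h8⟩ := hX₂
        constructor <;> linarith
      have hdv : |(y₁ - y₂) - (Y₁ - Y₂)| ≤ 2 * ρ := by
        rw [abs_sub_le_iff]
        obtain ⟨h1, h2⟩ := hy₁; obtain ⟨h3, h4⟩ := hy₂
        obtain ⟨h5, h6⟩ := hY₁; obtain ⟨h7, h8⟩ := hY₂
        constructor <;> linarith
      have hnum : |(X₁ - X₂) * (y₁ - y₂) - (x₁ - x₂) * (Y₁ - Y₂)| ≤
          2 * ρ * (A + 1) * |Y₁ - Y₂| := by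
        have hrw : (X₁ - X₂) * (y₁ - y₂) - (x₁ - x₂) * (Y₁ - Y₂) =
            (X₁ - X₂) * ((y₁ - y₂) - (Y₁ - Y₂)) - ((x₁ - x₂) - (X₁ - X₂)) * (Y₁ - Y₂) := by
          ring
        rw [hrw]
        calc |(X₁ - X₂) * ((y₁ - y₂) - (Y₁ - Y₂)) - ((x₁ - x₂) - (X₁ - X₂)) * (Y₁ - Y₂)|
            ≤ |(X₁ - X₂) * ((y₁ - y₂) - (Y₁ - Y₂))| + |((x₁ - x₂) - (X₁ - X₂)) * (Y₁ - Y₂)| :=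
              abs_sub _ _
          _ = |X₁ - X₂| * |(y₁ - y₂) - (Y₁ - Y₂)| +
              |(x₁ - x₂) - (X₁ - X₂)| * |Y₁ - Y₂| := by rw [abs_mul, abs_mul]
          _ ≤ (A * |Y₁ - Y₂|) * (2 * ρ) + (2 * ρ) * |Y₁ - Y₂| := by
              have t1 : |X₁ - X₂| * |(y₁ - y₂) - (Y₁ - Y₂)| ≤ (A * |Y₁ - Y₂|) * (2 * ρ) :=
                mul_le_mul hu₀ hdv (abs_nonneg _) (by positivity)
              have t2 : |(x₁ - x₂) - (X₁ - X₂)| * |Y₁ - Y₂| ≤ (2 * ρ) * |Y₁ - Y₂| :=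
                mul_le_mul_of_nonneg_right hdu (abs_nonneg _)
              linarith
          _ = 2 * ρ * (A + 1) * |Y₁ - Y₂| := by ring
      have hV₀pos : 0 < |Y₁ - Y₂| := lt_of_lt_of_le (by positivity) hv₀
      have hstep : |l - l₀| * |y₁ - y₂| ≤ 2 * ρ * (A + 1) := by
        have := habs.le.trans hnum
        rw [← mul_assoc] at this
        exact le_of_mul_le_mul_right this hV₀pos
      have hfin : |l - l₀| ≤ K := by
        have h1 : |l - l₀| * (D / (2 * max 1 A)) ≤ 2 * ρ * (A + 1) :=
          le_trans (mul_le_mul_of_nonneg_left hv (abs_nonneg _)) hstep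
        have h2 : max 1 A ≤ A + 1 := max_le (by linarith) (by linarith)
        have h1' : |l - l₀| * D ≤ 2 * ρ * (A + 1) * (2 * max 1 A) := by
          have h3 := mul_le_mul_of_nonneg_right h1
            (le_of_lt (by positivity : (0:ℝ) < 2 * max 1 A))
          calc |l - l₀| * D = |l - l₀| * (D / (2 * max 1 A)) * (2 * max 1 A) := by
                field_simp
            _ ≤ 2 * ρ * (A + 1) * (2 * max 1 A) := h3
        have h4 : 2 * ρ * (A + 1) * (2 * max 1 A) ≤ 2 * ρ * (A + 1) * (2 * (A + 1)) :=
          mul_le_mul_of_nonneg_left (by linarith) (by positivity)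
        have h5 : 2 * ρ * (A + 1) * (2 * (A + 1)) = 4 * (A + 1)^2 * ρ := by ring
        rw [hK, le_div_iff₀ hD]
        linarith
      rw [Set.mem_Icc]
      rw [abs_le] at hfin
      constructor <;> linarith [hfin.1, hfin.2]
    calc volume {l : ℝ | |l| ≤ A ∧
        (Set.image2 (fun x y => x + l * y) (Set.Icc a₁ b₁) (Set.Icc c₁ d₁) ∩
         Set.image2 (fun x y => x + l * y) (Set.Icc a₂ b₂) (Set.Icc c₂ d₂)).Nonempty}
        ≤ volume (Set.Icc (l₀ - K) (l₀ + K)) := measure_mono hsub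
      _ = ENNReal.ofReal (8 * (A + 1)^2 * ρ / D) := by
          rw [Real.volume_Icc]
          congr 1
          rw [hK]
          ring
      _ ≤ ENNReal.ofReal (8 * (A + 1)^2 * ρ / D) := le_rfl
end

section
/- Let d ∈ (0,1), A > 0, ρ ∈ (0,1). Suppose Λ(ρ) is a finite family of axis-parallel squares in [0,1]² of side ≈ ρ, with #Λ(ρ) ≤ C ρ^{−d}, mutual distances ≥ cρ, and the counting bound #{Q′ ∈ Λ(ρ) : dist(Q, Q′) < ε} ≤ C(ε/ρ)^{d} for all Q ∈ Λ(ρ) and all ε > ρ. Define N(λ) = #{(Q,Q′) ∈ Λ(ρ)² : Π_λ(Q) ∩ Π_λ(Q′) ≠ ∅} where Π_λ(x,y) = x + λy. Then ∫_{−A}^{A} N(λ) dλ ≤ C′ ρ^{−d} for a constant C′ depending only on A, C, c, d. -/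
/-!
Replace each square `Q i` by its corner `z i`. If `Π_λ(Q i)` and `Π_λ(Q j)` meet for some
`|λ| ≤ A`, then `|Π_λ(z i) - Π_λ(z j)| ≤ 2(1 + A)ρ`. Since `λ ↦ Π_λ(z i - z j)` is affine with
intercept or slope of size `≳ dist(z i, z j)`, the set of such `λ` has measure
`≲ ρ / dist(z i, z j)` (transversality). So the integral is at most
`#Λ · (2A + ρ · max_i ∑_{j ≠ i} dist(z i, z j)⁻¹)`. Splitting the inner sum over the dyadic
shells `2^k cρ ≤ dist < 2^(k+1) cρ`, the counting bound makes the `k`-th shell contribute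
`≲ (2^k)^d / (2^k cρ)`, a geometric series because `d < 1`; so the inner sum is `≲ ρ⁻¹`.
-/

open MeasureTheory Set Finset

def proj (l : ℝ) (z : ℝ × ℝ) : ℝ := z.1 + l * z.2

lemma proj_sub_proj (l : ℝ) (p q : ℝ × ℝ) :
    proj l p - proj l q = (p.1 - q.1) + l * (p.2 - q.2) := by
  unfold proj; ring

lemma abs_proj_sub_proj_le (l : ℝ) (p q : ℝ × ℝ) :
    |proj l p - proj l q| ≤ (1 + |l|) * dist p q := by
  have h1 : |p.1 - q.1| ≤ dist p q := by
    rw [Prod.dist_eq, ← Real.dist_eq]; exact le_max_left _ _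
  have h2 : |p.2 - q.2| ≤ dist p q := by
    rw [Prod.dist_eq, ← Real.dist_eq]; exact le_max_right _ _
  calc |proj l p - proj l q| ≤ |p.1 - q.1| + |l| * |p.2 - q.2| := by
        rw [proj_sub_proj, ← abs_mul]; exact abs_add_le _ _
    _ ≤ dist p q + |l| * dist p q := by gcongr
    _ = (1 + |l|) * dist p q := by ring

def band (B : ℝ) (p q : ℝ × ℝ) : Set ℝ := {l | |proj l p - proj l q| ≤ B}

lemma measurableSet_band (B : ℝ) (p q : ℝ × ℝ) : MeasurableSet (band B p q) :=
  measurableSet_le (by unfold proj; fun_prop) measurable_const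

lemma setOf_abs_add_mul_le_eq_closedBall {u m B : ℝ} (hm : m ≠ 0) :
    {l : ℝ | |u + l * m| ≤ B} = Metric.closedBall (-u / m) (B / |m|) := by
  ext l
  have : u + l * m = (l - -u / m) * m := by field_simp; ring
  rw [mem_ofPred_eq, Metric.mem_closedBall, Real.dist_eq, le_div_iff₀ (abs_pos.mpr hm),
    ← abs_mul, this]

lemma measureReal_Icc_inter_setOf_abs_add_mul_le {A B u m : ℝ} (hA : 0 ≤ A) (hB : 0 ≤ B)
    (ht : 0 < max |u| |m|) :
    volume.real (Icc (-A) A ∩ {l | |u + l * m| ≤ B}) ≤ 4 * (A + 1) * B / max |u| |m| := by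
  set t := max |u| |m|
  rw [le_div_iff₀ ht]
  by_cases hm : t ≤ 2 * (A + 1) * |m|
  · have hm0 : m ≠ 0 := abs_pos.mp (by nlinarith)
    calc volume.real (Icc (-A) A ∩ {l | |u + l * m| ≤ B}) * t
        ≤ 2 * (B / |m|) * (2 * (A + 1) * |m|) := by
          rw [setOf_abs_add_mul_le_eq_closedBall hm0]
          grw [measureReal_mono Set.inter_subset_right measure_closedBall_lt_top.ne,
            Real.volume_real_closedBall (by positivity), hm]
      _ = 4 * (A + 1) * B := by field_simp; ring
  by_cases hB2 : t ≤ 2 * B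
  · calc volume.real (Icc (-A) A ∩ {l | |u + l * m| ≤ B}) * t
        ≤ volume.real (Icc (-A) A) * t := by
          grw [measureReal_mono Set.inter_subset_left measure_Icc_lt_top.ne]
      _ = 2 * A * t := by rw [Real.volume_real_Icc, max_eq_left (by linarith)]; ring
      _ ≤ 4 * (A + 1) * B := by nlinarith
  -- the slope `m` is too small for `u + l m` to leave the region `|·| > t / 2`
  push Not at hm hB2
  have hu : t = |u| := by
    rcases max_cases |u| |m| with ⟨h, -⟩ | ⟨h, -⟩
    · exact h
    · rw [show t = |m| from h] at hm; nlinarith [abs_nonneg m]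
  have hempty : Icc (-A) A ∩ {l | |u + l * m| ≤ B} = ∅ := by
    refine eq_empty_of_forall_notMem fun l ⟨hlA, hl⟩ => ?_
    have hlm : |l * m| ≤ A * |m| := by
      rw [abs_mul]; gcongr; exact abs_le.mpr hlA
    have := abs_sub_abs_le_abs_sub u (-(l * m))
    rw [abs_neg, sub_neg_eq_add] at this
    rw [mem_ofPred_eq] at hl
    nlinarith
  rw [hempty, measureReal_empty, zero_mul]
  positivity

lemma measureReal_Icc_inter_band_le {A B : ℝ} (hA : 0 ≤ A) (hB : 0 ≤ B) {p q : ℝ × ℝ}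
    (hpq : p ≠ q) :
    volume.real (Icc (-A) A ∩ band B p q) ≤ 4 * (A + 1) * B / dist p q := by
  have hdist : dist p q = max |p.1 - q.1| |p.2 - q.2| := by simp [Prod.dist_eq, Real.dist_eq]
  simp only [band, proj_sub_proj, hdist]
  exact measureReal_Icc_inter_setOf_abs_add_mul_le hA hB (hdist ▸ dist_pos.mpr hpq)

lemma dist_le_of_mem_Icc_prod_Icc {x y s ρ : ℝ} (hs : s ≤ ρ) {p : ℝ × ℝ}
    (hp : p ∈ Icc x (x + s) ×ˢ Icc y (y + s)) : dist p (x, y) ≤ ρ := by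
  obtain ⟨⟨h1, h2⟩, h3, h4⟩ := hp
  rw [Prod.dist_eq, Real.dist_eq, Real.dist_eq, max_le_iff, abs_le, abs_le]
  refine ⟨⟨?_, ?_⟩, ?_, ?_⟩ <;> linarith

lemma mem_band_of_inter_nonempty {A ρ l : ℝ} (hl : |l| ≤ A) {S T : Set (ℝ × ℝ)} {p q : ℝ × ℝ}
    (hS : ∀ z ∈ S, dist z p ≤ ρ) (hT : ∀ z ∈ T, dist z q ≤ ρ)
    (h : (proj l '' S ∩ proj l '' T).Nonempty) : l ∈ band (2 * (1 + A) * ρ) p q := by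
  obtain ⟨_, ⟨a, ha, rfl⟩, b, hb, hab⟩ := h
  calc |proj l p - proj l q| = |(proj l p - proj l a) + (proj l b - proj l q)| := by
        rw [hab]; ring_nf
    _ ≤ (1 + |l|) * dist p a + (1 + |l|) * dist b q :=
        (abs_add_le _ _).trans
          (add_le_add (abs_proj_sub_proj_le l p a) (abs_proj_sub_proj_le l b q))
    _ ≤ (1 + A) * ρ + (1 + A) * ρ := by
        have hA : 0 ≤ 1 + A := by linarith [abs_nonneg l]
        rw [dist_comm p a]
        gcongr
        exacts [hS a ha, hT b hb]
    _ = 2 * (1 + A) * ρ := by ring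

lemma setIntegral_natCard_le_sum_measureReal {α κ : Type*} [MeasurableSpace α] {μ : Measure α}
    [Fintype κ] {s : Set α} (hs : MeasurableSet s) (hμs : μ s ≠ ⊤) {E : κ → Set α}
    (hE : ∀ p, MeasurableSet (E p)) {P : α → κ → Prop} (hP : ∀ x ∈ s, ∀ p, P x p → x ∈ E p) :
    ∫ x in s, (Nat.card {p | P x p} : ℝ) ∂μ ≤ ∑ p, μ.real (s ∩ E p) := by
  classical
  have hint : ∀ p, IntegrableOn ((E p).indicator (1 : α → ℝ)) s μ :=
    fun p => (integrableOn_const hμs).indicator (hE p)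
  calc ∫ x in s, (Nat.card {p | P x p} : ℝ) ∂μ
      ≤ ∫ x in s, ∑ p, (E p).indicator 1 x ∂μ := by
        refine integral_mono_of_nonneg (.of_forall fun x => by positivity)
          (integrable_finsetSum _ fun p _ => hint p) ?_
        filter_upwards [ae_restrict_mem hs] with x hx
        calc (Nat.card {p | P x p} : ℝ) ≤ Nat.card {p | x ∈ E p} := by
              exact_mod_cast Nat.card_mono (Set.toFinite _) fun p => hP x hx p
          _ = ∑ p, (E p).indicator 1 x := by
              simp [Set.indicator_apply, Nat.card_eq_fintype_card, Fintype.card_subtype]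
    _ = ∑ p, μ.real (s ∩ E p) := by
        rw [integral_finsetSum _ fun p _ => hint p]
        refine sum_congr rfl fun p _ => ?_
        rw [setIntegral_indicator (hE p), Pi.one_def, setIntegral_const, smul_eq_mul, mul_one]

lemma card_filter_dist_lt_le {α ι : Type*} [PseudoMetricSpace α] [Finite ι] (Q : ι → Set α)
    (z : ι → α) (hz : ∀ j, z j ∈ Q j) (i : ι) {C c d ρ : ℝ} (hc : 0 < c) (hρ : 0 < ρ) (hd : 0 ≤ d)
    (hcount : ∀ ε, ρ < ε → (Nat.card {j | ∃ p ∈ Q i, ∃ q ∈ Q j, dist p q < ε} : ℝ)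
      ≤ C * (ε / ρ) ^ d)
    (s : Finset ι) {r : ℝ} (hr : c * ρ ≤ r) :
    (#{j ∈ s | dist (z i) (z j) < r} : ℝ) ≤ C * (c + 1) ^ d * (r / (c * ρ)) ^ d := by
  have hsub : ↑{j ∈ s | dist (z i) (z j) < r} ⊆ {j | ∃ p ∈ Q i, ∃ q ∈ Q j, dist p q < r + ρ} := by
    intro j hj
    simp only [coe_filter, Set.mem_ofPred_eq] at hj
    exact ⟨z i, hz i, z j, hz j, by linarith [hj.2]⟩
  have hr0 : 0 < r := (by positivity : 0 < c * ρ).trans_le hr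
  have hC : 0 ≤ C := by
    have := (Nat.cast_nonneg _).trans (hcount (2 * ρ) (by linarith))
    exact (mul_nonneg_iff_of_pos_right (by positivity)).mp this
  calc (#{j ∈ s | dist (z i) (z j) < r} : ℝ)
      ≤ Nat.card {j | ∃ p ∈ Q i, ∃ q ∈ Q j, dist p q < r + ρ} := by
        rw [← Set.ncard_coe_finset, Nat.card_coe_set_eq]
        exact_mod_cast Set.ncard_le_ncard hsub (Set.toFinite _)
    _ ≤ C * ((r + ρ) / ρ) ^ d := hcount _ (by linarith)
    _ ≤ C * ((c + 1) * (r / (c * ρ))) ^ d := by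
        have : ρ ≤ r / c := by rw [le_div_iff₀ hc]; linarith
        gcongr
        calc (r + ρ) / ρ ≤ (r + r / c) / ρ := by gcongr
          _ = (c + 1) * (r / (c * ρ)) := by field_simp
    _ = C * (c + 1) ^ d * (r / (c * ρ)) ^ d := by
        rw [Real.mul_rpow (by positivity) (by positivity)]; ring

lemma inv_le_two_mul_sum_dyadic {δ t : ℝ} (hδ : 0 < δ) (hδt : δ ≤ t) {n : ℕ}
    (htn : t < 2 ^ n * δ) :
    t⁻¹ ≤ 2 * ∑ k ∈ range n, if t < 2 ^ (k + 1) * δ then (2 ^ (k + 1) * δ)⁻¹ else 0 := by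
  obtain ⟨k, hk, hk'⟩ :=
    exists_nat_pow_near ((one_le_div hδ).mpr hδt) (one_lt_two (α := ℝ))
  rw [le_div_iff₀ hδ] at hk
  rw [div_lt_iff₀ hδ] at hk'
  have hkn : k < n := by
    by_contra! h
    have := pow_le_pow_right₀ (one_le_two (α := ℝ)) h
    nlinarith
  calc t⁻¹ ≤ (2 ^ k * δ)⁻¹ := inv_anti₀ (by positivity) hk
    _ = 2 * (if t < 2 ^ (k + 1) * δ then (2 ^ (k + 1) * δ)⁻¹ else 0) := by
        rw [if_pos hk']; field_simp; ring
    _ ≤ _ := by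
        gcongr
        exact single_le_sum (f := fun k => if t < 2 ^ (k + 1) * δ then (2 ^ (k + 1) * δ)⁻¹ else 0)
          (fun j _ => by positivity) (mem_range.mpr hkn)

lemma sum_inv_dist_le {α ι : Type*} [PseudoMetricSpace α] (s : Finset ι) (x : ι → α) (a : α)
    {δ K d : ℝ} (hδ : 0 < δ) (hK : 0 ≤ K) (hd : d < 1)
    (hsep : ∀ j ∈ s, δ ≤ dist a (x j))
    (hgrowth : ∀ r, δ ≤ r → (#{j ∈ s | dist a (x j) < r} : ℝ) ≤ K * (r / δ) ^ d) :
    ∑ j ∈ s, (dist a (x j))⁻¹ ≤ 2 * K / ((1 - 2 ^ (d - 1)) * δ) := by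
  set q : ℝ := 2 ^ (d - 1) with hq
  have hq0 : 0 ≤ q := by positivity
  have hq1 : q < 1 := Real.rpow_lt_one_of_one_lt_of_neg one_lt_two (by linarith)
  -- `2 ^ n * δ` exceeds the sum of the distances, hence each of them
  obtain ⟨n, hn⟩ := pow_unbounded_of_one_lt ((∑ j ∈ s, dist a (x j)) / δ) one_lt_two
  rw [div_lt_iff₀ hδ] at hn
  have hscale : ∀ k : ℕ, (#{j ∈ s | dist a (x j) < 2 ^ (k + 1) * δ} : ℝ) * (2 ^ (k + 1) * δ)⁻¹
      ≤ K / δ * q ^ (k + 1) := by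
    intro k
    have hr : δ ≤ 2 ^ (k + 1) * δ := le_mul_of_one_le_left hδ.le (one_le_pow₀ one_le_two)
    grw [hgrowth _ hr]
    have : ((2 : ℝ) ^ (k + 1)) ^ d * (2 ^ (k + 1))⁻¹ = q ^ (k + 1) := by
      rw [← Real.rpow_pow_comm zero_le_two, hq, Real.rpow_sub_one two_ne_zero,
        div_pow, div_eq_mul_inv]
    rw [mul_div_cancel_right₀ _ hδ.ne', ← this]
    apply le_of_eq
    field_simp
  calc ∑ j ∈ s, (dist a (x j))⁻¹
      ≤ ∑ j ∈ s, 2 * ∑ k ∈ range n,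
          if dist a (x j) < 2 ^ (k + 1) * δ then (2 ^ (k + 1) * δ)⁻¹ else 0 := by
        refine sum_le_sum fun j hj => inv_le_two_mul_sum_dyadic hδ (hsep j hj) ?_
        refine lt_of_le_of_lt ?_ hn
        exact single_le_sum (fun i _ => dist_nonneg) hj
    _ = 2 * ∑ k ∈ range n,
          (#{j ∈ s | dist a (x j) < 2 ^ (k + 1) * δ} : ℝ) * (2 ^ (k + 1) * δ)⁻¹ := by
        rw [← mul_sum, sum_comm]
        simp only [sum_ite, sum_const_zero, add_zero, sum_const, nsmul_eq_mul]
    _ ≤ 2 * ∑ k ∈ range n, K / δ * q ^ (k + 1) := by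
        gcongr 2 * ?_
        exact sum_le_sum fun k _ => hscale k
    _ ≤ 2 * (K / δ * (1 - q)⁻¹) := by
        rw [← mul_sum]
        gcongr
        calc ∑ k ∈ range n, q ^ (k + 1) ≤ ∑ k ∈ range n, q ^ k :=
              sum_le_sum fun k _ => pow_le_pow_of_le_one hq0 hq1.le k.le_succ
          _ ≤ (1 - q)⁻¹ := by
              have := geom_sum_Ico_le_of_lt_one (m := 0) (n := n) hq0 hq1
              rwa [← range_eq_Ico, pow_zero, one_div] at this
    _ = 2 * K / ((1 - q) * δ) := by field_simp

lemma sum_measureReal_Icc_inter_band_le {ι : Type*} [Fintype ι] [DecidableEq ι]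
    (z : ι → ℝ × ℝ) (i : ι) {A B δ K d : ℝ} (hA : 0 ≤ A) (hB : 0 ≤ B) (hδ : 0 < δ)
    (hK : 0 ≤ K) (hd : d < 1) (hsep : ∀ j ≠ i, δ ≤ dist (z i) (z j))
    (hgrowth : ∀ r, δ ≤ r → (#{j ∈ univ.erase i | dist (z i) (z j) < r} : ℝ) ≤ K * (r / δ) ^ d) :
    ∑ j, volume.real (Icc (-A) A ∩ band B (z i) (z j))
      ≤ 2 * A + 4 * (A + 1) * B * (2 * K / ((1 - 2 ^ (d - 1)) * δ)) := by
  rw [← add_sum_erase _ _ (mem_univ i)]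
  gcongr ?_ + ?_
  · calc volume.real (Icc (-A) A ∩ band B (z i) (z i)) ≤ volume.real (Icc (-A) A) :=
          measureReal_mono inter_subset_left measure_Icc_lt_top.ne
      _ = 2 * A := by rw [Real.volume_real_Icc, max_eq_left (by linarith)]; ring
  · have hsep' : ∀ j ∈ univ.erase i, δ ≤ dist (z i) (z j) := fun j hj => hsep j (ne_of_mem_erase hj)
    calc ∑ j ∈ univ.erase i, volume.real (Icc (-A) A ∩ band B (z i) (z j))
        ≤ ∑ j ∈ univ.erase i, 4 * (A + 1) * B * (dist (z i) (z j))⁻¹ := by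
          refine sum_le_sum fun j hj => ?_
          rw [← div_eq_mul_inv]
          exact measureReal_Icc_inter_band_le hA hB (dist_pos.mp (hδ.trans_le (hsep' j hj)))
      _ ≤ _ := by
          rw [← mul_sum]
          gcongr
          exact sum_inv_dist_le _ z (z i) hδ hK hd hsep' hgrowth

/-- Energy/transversality estimate: for a family of `≈ρ`-squares in `[0,1]²` with
cardinality `≤ Cρ^(−d)`, mutual distances `≥ cρ`, and the natural counting bound
at all scales `ε > ρ`, the number `N(λ)` of pairs of squares whose projections
`Π_λ(x,y) = x + λy` overlap satisfies `∫_{-A}^{A} N(λ) dλ ≤ C′ ρ^(−d)`, with `C′`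
depending only on `A, C, c, d`. -/
theorem stmt_7 (A C c d : ℝ) (hA : 0 < A) (hC : 0 < C) (hc : 0 < c)
    (hd0 : 0 < d) (hd1 : d < 1) :
    ∃ C' : ℝ, 0 < C' ∧
    ∀ (ρ : ℝ), 0 < ρ → ρ < 1 →
    ∀ {ι : Type} [Fintype ι] (Q : ι → Set (ℝ × ℝ)),
      -- each Q i is an axis-parallel square in [0,1]² of side between cρ and ρ
      (∀ i, ∃ x y s, c * ρ ≤ s ∧ s ≤ ρ ∧
          Q i = Set.Icc x (x + s) ×ˢ Set.Icc y (y + s) ∧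
          Q i ⊆ Set.Icc 0 1 ×ˢ Set.Icc 0 1) →
      -- cardinality bound
      ((Fintype.card ι : ℝ) ≤ C * ρ ^ (-d)) →
      -- mutual separation
      (∀ i j, i ≠ j → ∀ p ∈ Q i, ∀ q ∈ Q j, c * ρ ≤ dist p q) →
      -- counting bound at every scale ε > ρ
      (∀ i, ∀ ε : ℝ, ρ < ε →
        ((Nat.card {j : ι | ∃ p ∈ Q i, ∃ q ∈ Q j, dist p q < ε} : ℝ)
          ≤ C * (ε / ρ) ^ d)) →
      ∫ l in Set.Icc (-A) A,
          ((Nat.card {p : ι × ι |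
              (((fun z : ℝ × ℝ => z.1 + l * z.2) '' Q p.1) ∩
               ((fun z : ℝ × ℝ => z.1 + l * z.2) '' Q p.2)).Nonempty} : ℝ))
        ≤ C' * ρ ^ (-d) := by
  classical
  set K := C * (c + 1) ^ d
  set M := 2 * A + 16 * (A + 1) ^ 2 * K / ((1 - 2 ^ (d - 1)) * c) with hM_def
  have hq : 0 < 1 - (2 : ℝ) ^ (d - 1) :=
    sub_pos.2 (Real.rpow_lt_one_of_one_lt_of_neg one_lt_two (by linarith))
  have hM : 0 < M := by positivity
  refine ⟨C * M, by positivity, ?_⟩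
  intro ρ hρ _ ι _ Q hQ hcard hsep hcount
  choose x y s hs_lo hs_hi hQ_eq _ using hQ
  set z : ι → ℝ × ℝ := fun i => (x i, y i)
  have hz : ∀ i, z i ∈ Q i := fun i => by
    have : 0 ≤ s i := (by positivity : 0 ≤ c * ρ).trans (hs_lo i)
    simp [hQ_eq, z, this]
  have hnear : ∀ i, ∀ p ∈ Q i, dist p (z i) ≤ ρ := fun i p hp =>
    dist_le_of_mem_Icc_prod_Icc (hs_hi i) (hQ_eq i ▸ hp)
  have hrow : ∀ i, ∑ j, volume.real (Icc (-A) A ∩ band (2 * (1 + A) * ρ) (z i) (z j)) ≤ M :=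
    fun i => (sum_measureReal_Icc_inter_band_le z i hA.le (by positivity) (by positivity)
      (by positivity) hd1 (fun j hj => hsep i j hj.symm _ (hz i) _ (hz j))
      (fun r hr => card_filter_dist_lt_le Q z hz i hc hρ hd0.le (hcount i) _ hr)).trans_eq
      (by rw [hM_def]; field_simp; ring)
  calc _ ≤ ∑ p : ι × ι, volume.real (Icc (-A) A ∩ band (2 * (1 + A) * ρ) (z p.1) (z p.2)) :=
        setIntegral_natCard_le_sum_measureReal measurableSet_Icc measure_Icc_lt_top.ne
          (fun _ => measurableSet_band _ _ _)
          fun l hl p hp => mem_band_of_inter_nonempty (abs_le.2 hl) (hnear p.1) (hnear p.2) hp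
    _ = ∑ i, ∑ j, volume.real (Icc (-A) A ∩ band (2 * (1 + A) * ρ) (z i) (z j)) :=
        Fintype.sum_prod_type _
    _ ≤ ∑ _i : ι, M := sum_le_sum fun i _ => hrow i
    _ = Fintype.card ι * M := by simp
    _ ≤ C * ρ ^ (-d) * M := by gcongr
    _ = C * M * ρ ^ (-d) := by ring
end

section
/- Let d ∈ (0,1), η > 0, and ρ ∈ (0,1) with ρ^η < 1/(2C₁) for a suitable constant C₁. Let Λ(ρ) be a finite family of ≈ρ-squares as in the discrete setting, and suppose λ ∈ [−A,A] satisfies N(λ) := #{(Q,Q′) ∈ 𝒮 × 𝒮 : Π_λ(Q) ∩ Π_λ(Q′) ≠ ∅} < ρ^{−2η−d} for a subfamily 𝒮 ⊆ Λ(ρ) with #𝒮 > ρ^{η−d}, where each Π_λ(Q) is an interval of length between c₂ρ and C₂ρ contained in [−A−1, A+1]. Then there exists 𝒮′ ⊆ 𝒮 with #𝒮′ > ρ^{4η−d} such that the intervals {Π_λ(Q) : Q ∈ 𝒮′} are pairwise disjoint. -/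
/-- Caro–Wei / Turán-type bound: in a finite graph given by a symmetric relation `r`
which is reflexive on `s`, there is an independent subset `t ⊆ s` with
`∑_{v ∈ s} 1 / deg(v) ≤ #t`, where `deg(v) = #(s.filter (r v))`. -/
theorem caroWei_aux {ι : Type} [DecidableEq ι] (r : ι → ι → Prop) [DecidableRel r]
    (hsymm : ∀ i j, r i j → r j i) :
    ∀ s : Finset ι, (∀ i ∈ s, r i i) →
    ∃ t ⊆ s, (∀ i ∈ t, ∀ j ∈ t, i ≠ j → ¬ r i j) ∧
      (∑ v ∈ s, (1 : ℝ) / ((s.filter (r v)).card)) ≤ t.card := by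
  intro s
  induction s using Finset.strongInduction with
  | _ s ih =>
    intro hrefl
    rcases s.eq_empty_or_nonempty with rfl | hne
    · exact ⟨∅, by simp⟩
    · obtain ⟨v, hv, hmin⟩ := s.exists_min_image (fun u => ((s.filter (r u)).card : ℝ)) hne
      set s' := s.filter (fun u => ¬ r v u) with hs'
      have hs's : s' ⊆ s := Finset.filter_subset _ _
      have hvs' : v ∉ s' := by simp [hs', hrefl v hv]
      have hss : s' ⊂ s := Finset.ssubset_iff_of_subset hs's |>.mpr ⟨v, hv, hvs'⟩
      obtain ⟨t', ht's, ht'ind, ht'sum⟩ :=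
        ih s' hss (fun i hi => hrefl i (hs's hi))
      have hvt' : v ∉ t' := fun h => hvs' (ht's h)
      refine ⟨insert v t', ?_, ?_, ?_⟩
      · intro x hx
        rcases Finset.mem_insert.mp hx with rfl | hx
        · exact hv
        · exact hs's (ht's hx)
      · intro i hi j hj hij
        rcases Finset.mem_insert.mp hi with rfl | hi' <;>
          rcases Finset.mem_insert.mp hj with rfl | hj'
        · exact absurd rfl hij
        · have := ht's hj'
          rw [hs', Finset.mem_filter] at this
          exact this.2
        · have := ht's hi'
          rw [hs', Finset.mem_filter] at this
          exact fun h => this.2 (hsymm _ _ h)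
        · exact ht'ind i hi' j hj' hij
      · -- sum estimate
        have hdv : 0 < ((s.filter (r v)).card : ℝ) := by
          have : v ∈ s.filter (r v) := Finset.mem_filter.mpr ⟨hv, hrefl v hv⟩
          exact_mod_cast Finset.card_pos.mpr ⟨v, this⟩
        have hsplit : (∑ u ∈ s, (1 : ℝ) / ((s.filter (r u)).card))
            = (∑ u ∈ s.filter (fun u => ¬ r v u), (1 : ℝ) / ((s.filter (r u)).card))
              + (∑ u ∈ s.filter (fun u => r v u), (1 : ℝ) / ((s.filter (r u)).card)) := by
          rw [add_comm, Finset.sum_filter_add_sum_filter_not s (fun u => r v u)]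
        have hA : (∑ u ∈ s.filter (fun u => r v u), (1 : ℝ) / ((s.filter (r u)).card)) ≤ 1 := by
          have hbound : ∀ u ∈ s.filter (fun u => r v u),
              (1 : ℝ) / ((s.filter (r u)).card) ≤ 1 / ((s.filter (r v)).card) := by
            intro u hu
            have hu' : u ∈ s := (Finset.mem_filter.mp hu).1
            exact one_div_le_one_div_of_le hdv (hmin u hu')
          calc (∑ u ∈ s.filter (fun u => r v u), (1 : ℝ) / ((s.filter (r u)).card))
              ≤ ∑ _u ∈ s.filter (fun u => r v u), (1 : ℝ) / ((s.filter (r v)).card) :=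
                Finset.sum_le_sum hbound
            _ = ((s.filter (r v)).card : ℝ) * (1 / ((s.filter (r v)).card)) := by
                rw [Finset.sum_const, nsmul_eq_mul]
            _ = 1 := by field_simp
        have hB : (∑ u ∈ s', (1 : ℝ) / ((s.filter (r u)).card))
            ≤ ∑ u ∈ s', (1 : ℝ) / ((s'.filter (r u)).card) := by
          apply Finset.sum_le_sum
          intro u hu
          have hd' : 0 < ((s'.filter (r u)).card : ℝ) := by
            have : u ∈ s'.filter (r u) :=
              Finset.mem_filter.mpr ⟨hu, hrefl u (hs's hu)⟩
            exact_mod_cast Finset.card_pos.mpr ⟨u, this⟩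
          have hle : ((s'.filter (r u)).card : ℝ) ≤ ((s.filter (r u)).card : ℝ) := by
            exact_mod_cast Finset.card_le_card (Finset.filter_subset_filter _ hs's)
          exact one_div_le_one_div_of_le hd' hle
        have hcardins : ((insert v t').card : ℝ) = t'.card + 1 := by
          rw [Finset.card_insert_of_notMem hvt']
          push_cast; ring
        rw [hsplit, hcardins]
        have := le_trans hB ht'sum
        linarith

/-- Extraction of a large disjoint subfamily of projections: if `𝒮` is a family of
`≈ρ`-squares with `#𝒮 > ρ^(η−d)` whose projections `Π_λ(Q) = {x + λy : (x,y) ∈ Q}`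
are intervals of length between `c₂ρ` and `C₂ρ` inside `[−A−1, A+1]`, and the number
of intersecting pairs of projections satisfies `N(λ) < ρ^(−2η−d)`, then (for a
suitable constant `C₁` depending on `A, c₂, C₂` and `ρ` with `ρ^η < 1/(2C₁)`) there
is `𝒮′ ⊆ 𝒮` with `#𝒮′ > ρ^(4η−d)` whose projections are pairwise disjoint. -/
theorem stmt_19 (A c₂ C₂ d η : ℝ) (hA : 0 < A) (hc₂ : 0 < c₂) (hC₂ : c₂ ≤ C₂)
    (hd0 : 0 < d) (hd1 : d < 1) (hη : 0 < η) :
    ∃ C₁ : ℝ, 0 < C₁ ∧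
    ∀ (ρ lam : ℝ), 0 < ρ → ρ < 1 → ρ ^ η < 1 / (2 * C₁) → |lam| ≤ A →
    ∀ {ι : Type} [DecidableEq ι] (𝒮 : Finset ι) (Q : ι → Set (ℝ × ℝ)),
      -- each projection is an interval of length between c₂ρ and C₂ρ in [−A−1,A+1]
      (∀ i ∈ 𝒮, ∃ x L' : ℝ, c₂ * ρ ≤ L' ∧ L' ≤ C₂ * ρ ∧
        (fun p : ℝ × ℝ => p.1 + lam * p.2) '' Q i = Set.Icc x (x + L') ∧
        Set.Icc x (x + L') ⊆ Set.Icc (-A - 1) (A + 1)) →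
      -- the subfamily is large
      (ρ ^ (η - d) < (𝒮.card : ℝ)) →
      -- few intersecting pairs of projections
      ((Nat.card {p : ι × ι | p.1 ∈ 𝒮 ∧ p.2 ∈ 𝒮 ∧
          (((fun z : ℝ × ℝ => z.1 + lam * z.2) '' Q p.1) ∩
           ((fun z : ℝ × ℝ => z.1 + lam * z.2) '' Q p.2)).Nonempty} : ℝ)
        < ρ ^ (-2 * η - d)) →
      ∃ 𝒮' ⊆ 𝒮, ρ ^ (4 * η - d) < (𝒮'.card : ℝ) ∧
        ∀ i ∈ 𝒮', ∀ j ∈ 𝒮', i ≠ j →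
          Disjoint ((fun z : ℝ × ℝ => z.1 + lam * z.2) '' Q i)
            ((fun z : ℝ × ℝ => z.1 + lam * z.2) '' Q j) := by
  refine ⟨1, one_pos, ?_⟩
  intro ρ lam hρ0 hρ1 _ _ ι _ 𝒮 Q hint hcard hN
  classical
  set Pj : ι → Set ℝ := fun i => (fun z : ℝ × ℝ => z.1 + lam * z.2) '' Q i with hPj
  set r : ι → ι → Prop := fun i j => (Pj i ∩ Pj j).Nonempty with hr
  have hsymm : ∀ i j, r i j → r j i := by
    intro i j h; rw [hr] at *; rwa [Set.inter_comm]
  have hrefl : ∀ i ∈ 𝒮, r i i := by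
    intro i hi
    obtain ⟨x, L', h1, h2, h3, _⟩ := hint i hi
    have hL : 0 < L' := lt_of_lt_of_le (mul_pos hc₂ hρ0) h1
    have : (Pj i).Nonempty := by
      rw [show Pj i = Set.Icc x (x + L') from h3]
      exact Set.nonempty_Icc.mpr (by linarith)
    rw [hr]; simpa [Set.inter_self] using this
  obtain ⟨t, hts, hind, hsum⟩ := caroWei_aux r hsymm 𝒮 hrefl
  -- relate `Nat.card` of the pair set with degree sums
  have hNcard : (Nat.card {p : ι × ι | p.1 ∈ 𝒮 ∧ p.2 ∈ 𝒮 ∧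
      (((fun z : ℝ × ℝ => z.1 + lam * z.2) '' Q p.1) ∩
       ((fun z : ℝ × ℝ => z.1 + lam * z.2) '' Q p.2)).Nonempty} : ℕ)
      = ∑ i ∈ 𝒮, (𝒮.filter (r i)).card := by
    have hsetEq : {p : ι × ι | p.1 ∈ 𝒮 ∧ p.2 ∈ 𝒮 ∧
        (((fun z : ℝ × ℝ => z.1 + lam * z.2) '' Q p.1) ∩
         ((fun z : ℝ × ℝ => z.1 + lam * z.2) '' Q p.2)).Nonempty}
        = (((𝒮 ×ˢ 𝒮).filter (fun p => r p.1 p.2) : Finset (ι × ι)) : Set (ι × ι)) := by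
      ext p
      simp [hr, hPj, Finset.mem_filter, Finset.mem_product, and_assoc]
    rw [hsetEq, Nat.card_coe_set_eq, Set.ncard_coe_finset]
    rw [Finset.card_filter, Finset.sum_product]
    congr 1
    ext i
    rw [Finset.card_filter]
  set n : ℝ := (𝒮.card : ℝ) with hn
  set Nr : ℝ := (∑ i ∈ 𝒮, ((𝒮.filter (r i)).card : ℝ)) with hNr
  have hNval : (Nat.card {p : ι × ι | p.1 ∈ 𝒮 ∧ p.2 ∈ 𝒮 ∧
      (((fun z : ℝ × ℝ => z.1 + lam * z.2) '' Q p.1) ∩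
       ((fun z : ℝ × ℝ => z.1 + lam * z.2) '' Q p.2)).Nonempty} : ℝ) = Nr := by
    rw [hNcard]; push_cast [hNr]; rfl
  rw [hNval] at hN
  -- positivity facts
  have hρη : 0 < ρ ^ (η - d) := Real.rpow_pos_of_pos hρ0 _
  have hn0 : 0 < n := lt_trans hρη hcard
  have hdegpos : ∀ i ∈ 𝒮, 0 < ((𝒮.filter (r i)).card : ℝ) := by
    intro i hi
    have : i ∈ 𝒮.filter (r i) := Finset.mem_filter.mpr ⟨hi, hrefl i hi⟩
    exact_mod_cast Finset.card_pos.mpr ⟨i, this⟩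
  have hNrpos : 0 < Nr := by
    rw [hNr]
    apply Finset.sum_pos hdegpos
    rw [← Finset.card_pos]
    exact_mod_cast Nat.cast_pos.mp hn0
  -- Cauchy–Schwarz (Sedrakyan): n^2 / Nr ≤ ∑ 1/deg
  have hCS : n ^ 2 / Nr ≤ ∑ i ∈ 𝒮, (1 : ℝ) / ((𝒮.filter (r i)).card) := by
    have := Finset.sq_sum_div_le_sum_sq_div 𝒮 (fun _ => (1 : ℝ))
      (g := fun i => ((𝒮.filter (r i)).card : ℝ)) hdegpos
    simpa [hn, hNr, one_pow] using this
  have htcard : n ^ 2 / Nr ≤ (t.card : ℝ) := le_trans hCS hsum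
  -- arithmetic with rpow
  have hkey : ρ ^ (4 * η - d) * ρ ^ (-2 * η - d) = ρ ^ (η - d) * ρ ^ (η - d) := by
    rw [← Real.rpow_add hρ0, ← Real.rpow_add hρ0]
    ring_nf
  have h4 : 0 < ρ ^ (4 * η - d) := Real.rpow_pos_of_pos hρ0 _
  have hfinal : ρ ^ (4 * η - d) < (t.card : ℝ) := by
    have h1 : ρ ^ (4 * η - d) * Nr < ρ ^ (4 * η - d) * ρ ^ (-2 * η - d) :=
      (mul_lt_mul_iff_right₀ h4).mpr hN
    have h2 : ρ ^ (η - d) * ρ ^ (η - d) < n ^ 2 := by nlinarith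
    have h3 : ρ ^ (4 * η - d) * Nr < n ^ 2 := by rw [hkey] at h1; linarith
    have h5 : ρ ^ (4 * η - d) < n ^ 2 / Nr := (lt_div_iff₀ hNrpos).mpr h3
    linarith
  refine ⟨t, hts, hfinal, ?_⟩
  intro i hi j hj hij
  have := hind i hi j hj hij
  rw [hr] at this
  rw [Set.disjoint_iff_inter_eq_empty]
  exact Set.not_nonempty_iff_eq_empty.mp this
end
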